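/- Place m = ⌊n − 2√n log n⌋·(n−1) particles i.i.d. uniformly on the n−1 vertices of K_n minus the sink; then with probability tending to 1 as n → ∞, every vertex receives fewer than n−1 particles, so the initial configuration is already stable. -/

import Mathlib

open Finset

/-- The number of particles placed: `⌊n − 2√n·log n⌋ · (n − 1)`, i.e. density
`⌊n − 2√n·log n⌋` per site on the `n − 1` non-sink vertices of `K_n`. -/
noncomputable def numParticles (n : ℕ) : ℕ :=
  ⌊(n : ℝ) - 2 * Real.sqrt n * Real.log n⌋₊ * (n - 1)

/-- The set of placements (functions assigning to each particle a site) in which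
every site receives fewer than `n − 1` particles, so that every vertex of `K_n`
is already stable. -/
noncomputable def goodPlacements (n : ℕ) : Finset (Fin (numParticles n) → Fin (n - 1)) :=
  univ.filter (fun f => ∀ s : Fin (n - 1),
    (univ.filter (fun i => f i = s)).card < n - 1)


open Real Filter
set_option maxHeartbeats 1000000

theorem mgf_sum (m N : ℕ) (s : Fin N) (x : ℝ) :
    ∑ f : Fin m → Fin N, x ^ (univ.filter (fun i => f i = s)).card
      = (x + (N:ℝ) - 1) ^ m := by
  have h1 : ∀ f : Fin m → Fin N, x ^ (univ.filter (fun i => f i = s)).card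
      = ∏ i : Fin m, (if f i = s then x else 1) := by
    intro f
    rw [← Finset.prod_filter]
    simp
  simp_rw [h1]
  rw [← Fintype.piFinset_univ,
    ← Finset.prod_univ_sum (fun _ : Fin m => (univ : Finset (Fin N)))
      (fun _ v => if v = s then x else 1)]
  have h2 : (∑ v : Fin N, if v = s then x else 1) = x + (N:ℝ) - 1 := by
    have : ∀ v : Fin N, (if v = s then x else 1) = (if v = s then x - 1 else 0) + 1 := by
      intro v; split <;> ring
    simp_rw [this, Finset.sum_add_distrib, Finset.sum_ite_eq' univ s (fun _ => x - 1)]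
    simp [Fintype.card_fin]
    ring
  simp [h2]

theorem bad_card_bound (n : ℕ) (x : ℝ) (hx : 1 ≤ x) :
    ((univ \ goodPlacements n).card : ℝ) * x ^ (n - 1) ≤
      ((n - 1 : ℕ) : ℝ) * (x + ((n - 1 : ℕ) : ℝ) - 1) ^ (numParticles n) := by
  set N := n - 1
  set m := numParticles n
  have hx0 : (0:ℝ) < x := lt_of_lt_of_le one_pos hx
  have hsub : univ \ goodPlacements n ⊆
      (univ : Finset (Fin N)).biUnion
        (fun s => univ.filter fun f : Fin m → Fin N =>
          N ≤ (univ.filter (fun i => f i = s)).card) := by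
    intro f hf
    simp only [goodPlacements, Finset.mem_sdiff, mem_filter, mem_univ, true_and, not_forall,
      not_lt] at hf
    obtain ⟨s, hs⟩ := hf
    simp only [mem_biUnion, mem_univ, mem_filter, true_and]
    exact ⟨s, hs⟩
  have hcard : ((univ \ goodPlacements n).card : ℝ) ≤
      ∑ s : Fin N, ((univ.filter fun f : Fin m → Fin N =>
        N ≤ (univ.filter (fun i => f i = s)).card).card : ℝ) := by
    push_cast
    exact_mod_cast le_trans (Nat.cast_le.mpr (card_le_card hsub))
      (Nat.cast_le.mpr (card_biUnion_le))
  have key : ∀ s : Fin N, ((univ.filter fun f : Fin m → Fin N =>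
      N ≤ (univ.filter (fun i => f i = s)).card).card : ℝ) * x ^ N ≤
      (x + (N:ℝ) - 1) ^ m := by
    intro s
    rw [← mgf_sum m N s x]
    calc ((univ.filter fun f : Fin m → Fin N =>
        N ≤ (univ.filter (fun i => f i = s)).card).card : ℝ) * x ^ N
        = ∑ _f ∈ univ.filter (fun f : Fin m → Fin N =>
            N ≤ (univ.filter (fun i => f i = s)).card), x ^ N := by
          rw [Finset.sum_const, nsmul_eq_mul]
      _ ≤ ∑ f ∈ univ.filter (fun f : Fin m → Fin N =>
            N ≤ (univ.filter (fun i => f i = s)).card),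
            x ^ (univ.filter (fun i => f i = s)).card := by
          apply Finset.sum_le_sum
          intro f hf
          simp only [mem_filter, mem_univ, true_and] at hf
          exact pow_le_pow_right₀ hx hf
      _ ≤ ∑ f : Fin m → Fin N, x ^ (univ.filter (fun i => f i = s)).card := by
          apply Finset.sum_le_sum_of_subset_of_nonneg (filter_subset _ _)
          intro f _ _
          positivity
  calc ((univ \ goodPlacements n).card : ℝ) * x ^ N
      ≤ (∑ s : Fin N, ((univ.filter fun f : Fin m → Fin N =>
          N ≤ (univ.filter (fun i => f i = s)).card).card : ℝ)) * x ^ N := by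
        apply mul_le_mul_of_nonneg_right hcard (by positivity)
    _ = ∑ s : Fin N, ((univ.filter fun f : Fin m → Fin N =>
          N ≤ (univ.filter (fun i => f i = s)).card).card : ℝ) * x ^ N := by
        rw [Finset.sum_mul]
    _ ≤ ∑ _s : Fin N, (x + (N:ℝ) - 1) ^ m := Finset.sum_le_sum (fun s _ => key s)
    _ = ((N:ℕ):ℝ) * (x + (N:ℝ) - 1) ^ m := by
        simp [card_univ]

theorem bad_frac_bound (n : ℕ) (hn : 16 ≤ (n:ℝ))
    (hlog : Real.log n ≤ Real.sqrt n / 8) :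
    ((univ \ goodPlacements n).card : ℝ) / (((n - 1 : ℕ) : ℝ) ^ numParticles n) ≤
      (n:ℝ) * Real.exp (-(Real.log n)^2 / 4) := by
  have hn1 : 1 ≤ n := by exact_mod_cast le_trans (by norm_num : (1:ℝ) ≤ 16) hn
  set k : ℝ := ((n - 1 : ℕ) : ℝ) with hkdef
  have hk : k = (n:ℝ) - 1 := by rw [hkdef, Nat.cast_sub hn1]; norm_num
  have hkpos : (0:ℝ) < k := by rw [hk]; linarith
  have hsqnn : (0:ℝ) ≤ Real.sqrt n := Real.sqrt_nonneg _
  have hsq2 : Real.sqrt n ^ 2 = (n:ℝ) := Real.sq_sqrt (by linarith)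
  have hs4 : (4:ℝ) ≤ Real.sqrt n := by nlinarith
  have hnpos : (0:ℝ) < n := by linarith
  have hlog1 : (1:ℝ) ≤ Real.log n := by
    rw [Real.le_log_iff_exp_le hnpos]
    have := Real.exp_one_lt_d9
    linarith
  have h2s : 2 * Real.sqrt n * Real.log n ≤ (n:ℝ) / 4 := by nlinarith
  have hx0 : (0:ℝ) ≤ (n:ℝ) - 2 * Real.sqrt n * Real.log n := by linarith
  set d : ℝ := ((⌊(n : ℝ) - 2 * Real.sqrt n * Real.log n⌋₊ : ℕ) : ℝ) with hddef
  have hd : d ≤ (n:ℝ) - 2 * Real.sqrt n * Real.log n := Nat.floor_le hx0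
  have hd0 : (0:ℝ) ≤ d := Nat.cast_nonneg _
  set t : ℝ := k - d with htdef
  have ht1 : Real.sqrt n * Real.log n ≤ t := by
    have : Real.sqrt n * Real.log n ≥ 4 := by nlinarith
    rw [htdef, hk]; nlinarith
  have ht0 : (0:ℝ) < t := by nlinarith
  have htk : t ≤ k := by rw [htdef]; linarith
  set s : ℝ := t / (2 * k) with hsdef
  have hs0 : (0:ℝ) ≤ s := by positivity
  have hshalf : s ≤ 1/2 := by
    rw [hsdef, div_le_iff₀ (by linarith)]; linarith
  set x : ℝ := 1 + s with hxdef
  have hx1 : (1:ℝ) ≤ x := by rw [hxdef]; linarith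
  have hxpos : (0:ℝ) < x := by linarith
  set m : ℕ := numParticles n with hmdef
  have hm : (m:ℝ) = d * k := by
    rw [hmdef, numParticles, Nat.cast_mul]
  -- key1 : exp (s*(1-s)) ≤ 1 + s
  have key1 : Real.exp (s * (1 - s)) ≤ 1 + s := by
    have hy : s * (1 - s) ≤ 1/4 := by nlinarith
    have hpos : (0:ℝ) < 1 - s * (1 - s) := by nlinarith
    have h1 := Real.add_one_le_exp (-(s * (1 - s)))
    have e : Real.exp (s * (1 - s)) * Real.exp (-(s * (1 - s))) = 1 := by
      rw [← Real.exp_add]; simp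
    have h2 : Real.exp (s * (1 - s)) * (1 - s * (1 - s)) ≤ 1 := by
      have h3 := mul_le_mul_of_nonneg_left h1 (Real.exp_pos (s * (1 - s))).le
      calc Real.exp (s * (1 - s)) * (1 - s * (1 - s))
          = Real.exp (s * (1 - s)) * (-(s * (1 - s)) + 1) := by ring
        _ ≤ Real.exp (s * (1 - s)) * Real.exp (-(s * (1 - s))) := h3
        _ = 1 := e
    have h4 : (1:ℝ) ≤ (1 + s) * (1 - s * (1 - s)) := by nlinarith [pow_nonneg hs0 3]
    have h5 : Real.exp (s * (1 - s)) * (1 - s * (1 - s)) ≤ (1 + s) * (1 - s * (1 - s)) :=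
      h2.trans h4
    exact le_of_mul_le_mul_right h5 hpos
  -- key2 : exp (k * (s*(1-s))) ≤ x ^ (n-1)
  have key2 : Real.exp (k * (s * (1 - s))) ≤ x ^ (n - 1) := by
    rw [hkdef, Real.exp_nat_mul]
    exact pow_le_pow_left₀ (Real.exp_pos _).le key1 _
  -- key3 : (1 + s/k)^m ≤ exp (d * s)
  have key3 : (1 + s / k) ^ m ≤ Real.exp (d * s) := by
    have h1 : 1 + s / k ≤ Real.exp (s / k) := by
      have := Real.add_one_le_exp (s / k); linarith
    calc (1 + s / k) ^ m ≤ Real.exp (s / k) ^ m :=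
          pow_le_pow_left₀ (by positivity) h1 m
      _ = Real.exp (m * (s / k)) := by rw [Real.exp_nat_mul]
      _ = Real.exp (d * s) := by
          congr 1; rw [hm]; field_simp
  have hkm : (0:ℝ) < k ^ m := pow_pos hkpos m
  have hxn : (0:ℝ) < x ^ (n - 1) := pow_pos hxpos _
  have main := bad_card_bound n x hx1
  have step1 : (x + k - 1) ^ m = k ^ m * (1 + s / k) ^ m := by
    rw [← mul_pow]; congr 1; field_simp [hxdef]; ring
  set A : ℝ := ((univ \ goodPlacements n).card : ℝ) with hAdef
  have hA0 : (0:ℝ) ≤ A := Nat.cast_nonneg _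
  have step2 : A * Real.exp (k * (s * (1 - s))) ≤ k * (k ^ m * Real.exp (d * s)) := by
    calc A * Real.exp (k * (s * (1 - s))) ≤ A * x ^ (n - 1) :=
          mul_le_mul_of_nonneg_left key2 hA0
      _ ≤ k * (x + k - 1) ^ m := main
      _ = k * (k ^ m * (1 + s / k) ^ m) := by rw [step1]
      _ ≤ k * (k ^ m * Real.exp (d * s)) := by
          apply mul_le_mul_of_nonneg_left _ hkpos.le
          exact mul_le_mul_of_nonneg_left key3 hkm.le
  have step3 : A ≤ k * Real.exp (d * s - k * (s * (1 - s))) * k ^ m := by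
    have hE : (0:ℝ) < Real.exp (k * (s * (1 - s))) := Real.exp_pos _
    rw [← le_div_iff₀ hE] at step2
    calc A ≤ k * (k ^ m * Real.exp (d * s)) / Real.exp (k * (s * (1 - s))) := step2
      _ = k * Real.exp (d * s - k * (s * (1 - s))) * k ^ m := by
          rw [Real.exp_sub]; field_simp
  have expeq : d * s - k * (s * (1 - s)) = -(t ^ 2 / (4 * k)) := by
    rw [hsdef, htdef]; field_simp; ring
  have expbound : Real.exp (d * s - k * (s * (1 - s))) ≤ Real.exp (-(Real.log n)^2 / 4) := by
    rw [expeq, Real.exp_le_exp]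
    rw [neg_div, neg_le_neg_iff, div_le_div_iff₀ (by norm_num) (by linarith)]
    have hkn : k ≤ (n:ℝ) := by rw [hk]; linarith
    have hsl : (0:ℝ) ≤ Real.sqrt n * Real.log n := mul_nonneg hsqnn (by linarith)
    have e1 : Real.log n ^ 2 * (4 * k) ≤ Real.log n ^ 2 * (4 * n) := by
      apply mul_le_mul_of_nonneg_left _ (sq_nonneg _)
      linarith
    have e2 : Real.log n ^ 2 * (4 * (n:ℝ)) = 4 * (Real.sqrt n * Real.log n) ^ 2 := by
      rw [mul_pow, hsq2]; ring
    have e3 : (Real.sqrt n * Real.log n) ^ 2 ≤ t ^ 2 := pow_le_pow_left₀ hsl ht1 2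
    linarith
  rw [div_le_iff₀ hkm]
  calc A ≤ k * Real.exp (d * s - k * (s * (1 - s))) * k ^ m := step3
    _ ≤ (n:ℝ) * Real.exp (-(Real.log n)^2 / 4) * k ^ m := by
        apply mul_le_mul_of_nonneg_right _ hkm.le
        apply mul_le_mul (by rw [hk]; linarith) expbound (Real.exp_pos _).le (by linarith)

theorem tendsto_bound :
    Tendsto (fun n : ℕ => (n:ℝ) * Real.exp (-(Real.log n)^2 / 4)) atTop (nhds 0) := by
  have hL : Tendsto (fun n : ℕ => Real.log n) atTop atTop :=
    Real.tendsto_log_atTop.comp tendsto_natCast_atTop_atTop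
  have hg : Tendsto (fun n : ℕ => Real.log n - (Real.log n)^2 / 4) atTop atBot := by
    apply tendsto_atBot_mono' atTop (f₁ := fun n : ℕ => -Real.log n)
    · filter_upwards [hL.eventually (eventually_ge_atTop (8:ℝ))] with n h8
      nlinarith [h8]
    · exact tendsto_neg_atTop_atBot.comp hL
  have h2 : Tendsto (fun n : ℕ => Real.exp (Real.log n - (Real.log n)^2 / 4))
      atTop (nhds 0) := Real.tendsto_exp_atBot.comp hg
  apply h2.congr'
  filter_upwards [eventually_gt_atTop 0] with n hn
  have hn0 : (0:ℝ) < n := by exact_mod_cast hn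
  rw [show Real.log n - (Real.log n)^2/4 = Real.log n + (-(Real.log n)^2/4) by ring,
    Real.exp_add, Real.exp_log hn0]


theorem ev_log : ∀ᶠ n : ℕ in atTop, Real.log n ≤ Real.sqrt n / 8 := by
  have ho := Real.isLittleO_log_id_atTop.def (by norm_num : (0:ℝ) < 1/16)
  have hsq : Tendsto (fun n : ℕ => Real.sqrt n) atTop atTop := by
    have h := (tendsto_rpow_atTop (by norm_num : (0:ℝ) < 1/2)).comp
      (tendsto_natCast_atTop_atTop (R := ℝ))
    exact h.congr fun n => (Real.sqrt_eq_rpow (n:ℝ)).symm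
  filter_upwards [hsq.eventually ho] with n h1
  simp only [Real.norm_eq_abs, id] at h1
  rw [abs_of_nonneg (Real.sqrt_nonneg _)] at h1
  have h2 : Real.log n = 2 * Real.log (Real.sqrt n) := by
    rw [Real.log_sqrt (Nat.cast_nonneg n)]; ring
  have h3 : Real.log (Real.sqrt n) ≤ |Real.log (Real.sqrt n)| := le_abs_self _
  linarith


/-- Place `⌊n − 2√n·log n⌋·(n−1)` particles i.i.d. uniformly on the `n − 1` non-sink
vertices of `K_n`. Then with probability tending to 1 as `n → ∞`, every vertex
receives fewer than `n − 1` particles, so the initial configuration is already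
stable. -/
theorem complete_graph_subcritical_stable :
    Filter.Tendsto
      (fun n : ℕ => ((goodPlacements n).card : ℝ) /
        (Fintype.card (Fin (numParticles n) → Fin (n - 1)) : ℝ))
      Filter.atTop (nhds 1) := by
  set badfrac : ℕ → ℝ := fun n =>
    ((univ \ goodPlacements n).card : ℝ) / (((n - 1 : ℕ) : ℝ) ^ numParticles n)
    with hbadfrac
  have hbad0 : Tendsto badfrac atTop (nhds 0) := by
    apply squeeze_zero' (g := fun n : ℕ => (n:ℝ) * Real.exp (-(Real.log n)^2 / 4))
    · filter_upwards with n
      apply div_nonneg (Nat.cast_nonneg _) (by positivity)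
    · filter_upwards [ev_log, eventually_ge_atTop 16] with n hlog hn
      exact bad_frac_bound n (by exact_mod_cast hn) hlog
    · exact tendsto_bound
  have hev : ∀ᶠ n : ℕ in atTop,
      ((goodPlacements n).card : ℝ) /
        (Fintype.card (Fin (numParticles n) → Fin (n - 1)) : ℝ) = 1 - badfrac n := by
    filter_upwards [eventually_ge_atTop 2] with n hn
    have hn1 : 1 ≤ n - 1 := by omega
    have hu : (univ : Finset (Fin (numParticles n) → Fin (n - 1))).card
        = (n - 1) ^ numParticles n := by
      rw [card_univ, Fintype.card_fun, Fintype.card_fin, Fintype.card_fin]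
    have hT : (Fintype.card (Fin (numParticles n) → Fin (n - 1)) : ℝ)
        = ((n - 1 : ℕ) : ℝ) ^ numParticles n := by
      rw [Fintype.card_fun, Fintype.card_fin, Fintype.card_fin]; push_cast; ring
    have hTpos : (0:ℝ) < ((n - 1 : ℕ) : ℝ) ^ numParticles n := by
      apply pow_pos; exact_mod_cast hn1
    have hle := card_le_card (subset_univ (goodPlacements n))
    have hsd := card_sdiff_of_subset (subset_univ (goodPlacements n))
    have hgood : ((goodPlacements n).card : ℝ)
        = ((n - 1 : ℕ) : ℝ) ^ numParticles n - ((univ \ goodPlacements n).card : ℝ) := by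
      rw [hsd, hu]
      rw [hu] at hle
      rw [Nat.cast_sub hle]
      push_cast
      ring
    rw [hT, hgood, hbadfrac]
    rw [sub_div, div_self hTpos.ne']
  apply Tendsto.congr' (Filter.EventuallyEq.symm hev)
  have : Tendsto (fun n : ℕ => 1 - badfrac n) atTop (nhds (1 - 0)) :=
    tendsto_const_nhds.sub hbad0
  simpa using this
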